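/- Let m ∈ C([0,1]) be a function that is positive somewhere in (0,1) and satisfies ∫₀¹ m(x) dx < 0. Then λ* := inf { ∫₀¹ (φ')² dx / ∫₀¹ m φ² dx : φ ∈ H¹(0,1), ∫₀¹ m φ² dx > 0 } satisfies λ* > 0. -/

import Mathlib

open Set MeasureTheory intervalIntegral


/-- Cauchy–Schwarz on [0,1] via expanding a square. -/
lemma cs_aux (g : ℝ → ℝ) (hg : Continuous g) :
    (∫ x in (0:ℝ)..1, |g x|) ^ 2 ≤ ∫ x in (0:ℝ)..1, g x ^ 2 := by
  set A : ℝ := ∫ x in (0:ℝ)..1, |g x| with hA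
  have h1 : IntervalIntegrable (fun x => g x ^ 2) volume 0 1 := (hg.pow 2).intervalIntegrable 0 1
  have h2 : IntervalIntegrable (fun x => 2 * A * |g x|) volume 0 1 :=
    (continuous_const.mul hg.abs).intervalIntegrable 0 1
  have key : 0 ≤ ∫ x in (0:ℝ)..1, (|g x| - A) ^ 2 :=
    intervalIntegral.integral_nonneg (by norm_num) (fun x _ => sq_nonneg _)
  have expand : (∫ x in (0:ℝ)..1, (|g x| - A) ^ 2)
      = (∫ x in (0:ℝ)..1, g x ^ 2) - A ^ 2 := by
    have : ∀ x, (|g x| - A) ^ 2 = g x ^ 2 - 2 * A * |g x| + A ^ 2 := by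
      intro x; rw [sub_sq]; rw [sq_abs]; ring
    simp_rw [this]
    rw [intervalIntegral.integral_add (h1.sub h2) (intervalIntegrable_const),
      intervalIntegral.integral_sub h1 h2, intervalIntegral.integral_const_mul,
      intervalIntegral.integral_const]
    simp [← hA]; ring
  linarith [key, expand.symm ▸ key]

lemma osc_le (φ : ℝ → ℝ) (hφ : ContDiff ℝ 1 φ) {x y : ℝ}
    (hy : y ∈ Icc (0:ℝ) 1) (hx : x ∈ Icc (0:ℝ) 1) (hyx : y ≤ x) :
    |φ x - φ y| ≤ ∫ t in (0:ℝ)..1, |deriv φ t| := by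
  have hd : Continuous (deriv φ) := (hφ.iterate_deriv' 0 1).continuous
  have hftc : φ x - φ y = ∫ t in y..x, deriv φ t :=
    (integral_deriv_eq_sub (fun t _ => hφ.differentiable one_ne_zero t)
      (hd.intervalIntegrable y x)).symm
  rw [hftc]
  calc |∫ t in y..x, deriv φ t| ≤ ∫ t in y..x, |deriv φ t| :=
        intervalIntegral.abs_integral_le_integral_abs hyx
    _ ≤ ∫ t in (0:ℝ)..1, |deriv φ t| := by
        apply intervalIntegral.integral_mono_interval hy.1 hyx hx.2
        · filter_upwards with t using abs_nonneg _
        · exact (hd.abs).intervalIntegrable 0 1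

lemma osc_aux (φ : ℝ → ℝ) (hφ : ContDiff ℝ 1 φ) {x y : ℝ}
    (hx : x ∈ Icc (0:ℝ) 1) (hy : y ∈ Icc (0:ℝ) 1) :
    |φ x - φ y| ≤ ∫ t in (0:ℝ)..1, |deriv φ t| := by
  rcases le_total y x with h | h
  · exact osc_le φ hφ hy hx h
  · rw [abs_sub_comm]; exact osc_le φ hφ hx hy h

lemma dev_aux (φ : ℝ → ℝ) (hφ : ContDiff ℝ 1 φ)
    (hosc : ∀ x ∈ Icc (0:ℝ) 1, ∀ y ∈ Icc (0:ℝ) 1,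
      |φ x - φ y| ≤ ∫ t in (0:ℝ)..1, |deriv φ t|)
    {x : ℝ} (hx : x ∈ Icc (0:ℝ) 1) :
    |φ x - ∫ y in (0:ℝ)..1, φ y| ≤ ∫ t in (0:ℝ)..1, |deriv φ t| := by
  have hc := hφ.continuous
  have heq : φ x - (∫ y in (0:ℝ)..1, φ y) = ∫ y in (0:ℝ)..1, (φ x - φ y) := by
    rw [intervalIntegral.integral_sub intervalIntegrable_const (hc.intervalIntegrable 0 1),
      intervalIntegral.integral_const]
    simp
  rw [heq]
  have := intervalIntegral.norm_integral_le_of_norm_le_const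
    (C := ∫ t in (0:ℝ)..1, |deriv φ t|) (f := fun y => φ x - φ y) (a := (0:ℝ)) (b := 1)
    (fun y hy => by
      rw [Real.norm_eq_abs]
      exact hosc x hx y (mem_Icc_of_Ioc (by simpa [uIoc_of_le zero_le_one] using hy)))
  simpa using this

lemma key_bound (m φ : ℝ → ℝ) (hm : ContinuousOn m (Icc 0 1)) (hφ : ContDiff ℝ 1 φ)
    (M : ℝ) (hM : ∀ x ∈ Icc (0:ℝ) 1, |m x| ≤ M) (hMpos : 0 < M)
    (hδ : 0 < -∫ x in (0:ℝ)..1, m x)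
    (hdev : ∀ x ∈ Icc (0:ℝ) 1,
      |φ x - ∫ y in (0:ℝ)..1, φ y| ≤ ∫ t in (0:ℝ)..1, |deriv φ t|)
    (hcs : (∫ t in (0:ℝ)..1, |deriv φ t|) ^ 2 ≤ ∫ t in (0:ℝ)..1, (deriv φ t) ^ 2) :
    (∫ x in (0:ℝ)..1, m x * φ x ^ 2)
      ≤ (M ^ 2 / (-∫ x in (0:ℝ)..1, m x) + M) * ∫ t in (0:ℝ)..1, (deriv φ t) ^ 2 := by
  set δ : ℝ := -∫ x in (0:ℝ)..1, m x with hδdef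
  set t : ℝ := ∫ y in (0:ℝ)..1, φ y with ht
  set A : ℝ := ∫ s in (0:ℝ)..1, |deriv φ s| with hA
  set P : ℝ := ∫ s in (0:ℝ)..1, (deriv φ s) ^ 2 with hP
  have hA0 : 0 ≤ A := intervalIntegral.integral_nonneg zero_le_one (fun x _ => abs_nonneg _)
  have hP0 : 0 ≤ P := intervalIntegral.integral_nonneg zero_le_one (fun x _ => sq_nonneg _)
  set w : ℝ → ℝ := fun x => φ x - t with hw
  have hwc : Continuous w := hφ.continuous.sub continuous_const
  have huIcc : uIcc (0:ℝ) 1 = Icc 0 1 := uIcc_of_le zero_le_one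
  have hmint : IntervalIntegrable m volume 0 1 := by
    apply ContinuousOn.intervalIntegrable; rwa [huIcc]
  have hmw : IntervalIntegrable (fun x => m x * w x) volume 0 1 := by
    apply ContinuousOn.intervalIntegrable
    rw [huIcc]; exact hm.mul hwc.continuousOn
  have hmw2 : IntervalIntegrable (fun x => m x * w x ^ 2) volume 0 1 := by
    apply ContinuousOn.intervalIntegrable
    rw [huIcc]; exact hm.mul (hwc.pow 2).continuousOn
  have hmt2 : IntervalIntegrable (fun x => m x * t ^ 2) volume 0 1 := hmint.mul_const _
  -- split D
  have hsplit : (∫ x in (0:ℝ)..1, m x * φ x ^ 2)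
      = t ^ 2 * (∫ x in (0:ℝ)..1, m x) + 2 * t * (∫ x in (0:ℝ)..1, m x * w x)
        + (∫ x in (0:ℝ)..1, m x * w x ^ 2) := by
    have : ∀ x, m x * φ x ^ 2
        = m x * t ^ 2 + 2 * t * (m x * w x) + m x * w x ^ 2 := by
      intro x; simp only [hw]; ring
    simp_rw [this]
    rw [intervalIntegral.integral_add (hmt2.add (hmw.const_mul _)) hmw2,
      intervalIntegral.integral_add hmt2 (hmw.const_mul _),
      intervalIntegral.integral_const_mul, intervalIntegral.integral_mul_const]
    ring
  -- bounds on pieces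
  have hI2 : |∫ x in (0:ℝ)..1, m x * w x| ≤ M * A := by
    have := intervalIntegral.norm_integral_le_of_norm_le_const (C := M * A)
      (f := fun x => m x * w x) (a := (0:ℝ)) (b := 1) (fun x hx => by
        have hxI : x ∈ Icc (0:ℝ) 1 := mem_Icc_of_Ioc (by simpa [uIoc_of_le zero_le_one] using hx)
        rw [Real.norm_eq_abs, abs_mul]
        exact mul_le_mul (hM x hxI) (hdev x hxI) (abs_nonneg _) hMpos.le)
    simpa using this
  have hI3 : (∫ x in (0:ℝ)..1, m x * w x ^ 2) ≤ M * A ^ 2 := by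
    have := intervalIntegral.norm_integral_le_of_norm_le_const (C := M * A ^ 2)
      (f := fun x => m x * w x ^ 2) (a := (0:ℝ)) (b := 1) (fun x hx => by
        have hxI : x ∈ Icc (0:ℝ) 1 := mem_Icc_of_Ioc (by simpa [uIoc_of_le zero_le_one] using hx)
        rw [Real.norm_eq_abs, abs_mul, abs_pow]
        have h1 := hdev x hxI
        have : |w x| ^ 2 ≤ A ^ 2 := by nlinarith [abs_nonneg (w x)]
        exact mul_le_mul (hM x hxI) this (by positivity) hMpos.le)
    exact (le_abs_self _).trans (by simpa using this)
  have hquad : t ^ 2 * (∫ x in (0:ℝ)..1, m x) + 2 * t * (∫ x in (0:ℝ)..1, m x * w x)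
      ≤ M ^ 2 * A ^ 2 / δ := by
    have hI : (∫ x in (0:ℝ)..1, m x) = -δ := by rw [hδdef]; ring
    rw [hI]
    have h2 : 2 * t * (∫ x in (0:ℝ)..1, m x * w x) ≤ 2 * |t| * (M * A) := by
      calc 2 * t * (∫ x in (0:ℝ)..1, m x * w x)
          ≤ |2 * t * (∫ x in (0:ℝ)..1, m x * w x)| := le_abs_self _
        _ = 2 * |t| * |∫ x in (0:ℝ)..1, m x * w x| := by
            rw [abs_mul, abs_mul]; norm_num
        _ ≤ 2 * |t| * (M * A) := by
            apply mul_le_mul_of_nonneg_left hI2 (by positivity)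
    have hsq : 0 ≤ (δ * |t| - M * A) ^ 2 := sq_nonneg _
    have ht2 : t ^ 2 = |t| ^ 2 := (sq_abs t).symm
    have hstep : t ^ 2 * -δ + 2 * t * (∫ x in (0:ℝ)..1, m x * w x)
        ≤ -δ * |t| ^ 2 + 2 * |t| * (M * A) := by rw [ht2]; linarith
    have hstep2 : (-δ * |t| ^ 2 + 2 * |t| * (M * A)) * δ ≤ M ^ 2 * A ^ 2 := by
      nlinarith [hsq]
    have hq : -δ * |t| ^ 2 + 2 * |t| * (M * A) ≤ M ^ 2 * A ^ 2 / δ :=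
      (le_div_iff₀ hδ).mpr hstep2
    exact hstep.trans hq
  calc (∫ x in (0:ℝ)..1, m x * φ x ^ 2)
      ≤ M ^ 2 * A ^ 2 / δ + M * A ^ 2 := by rw [hsplit]; linarith
    _ = (M ^ 2 / δ + M) * A ^ 2 := by ring
    _ ≤ (M ^ 2 / δ + M) * P := by
        apply mul_le_mul_of_nonneg_left _ (by positivity)
        simpa [hA, hP] using hcs

lemma nonempty_aux (m : ℝ → ℝ) (hm : ContinuousOn m (Icc 0 1))
    (hpos : ∃ x ∈ Ioo (0:ℝ) 1, 0 < m x) :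
    ∃ φ : ℝ → ℝ, ContDiff ℝ 1 φ ∧ 0 < ∫ x in (0:ℝ)..1, m x * (φ x) ^ 2 := by
  obtain ⟨x₀, hx₀, hmx₀⟩ := hpos
  have hca : ContinuousAt m x₀ :=
    hm.continuousAt (Icc_mem_nhds hx₀.1 hx₀.2)
  have hs : {x : ℝ | 0 < m x} ∩ Ioo 0 1 ∈ nhds x₀ := by
    apply Filter.inter_mem
    · exact hca.preimage_mem_nhds (isOpen_Ioi.mem_nhds hmx₀)
    · exact isOpen_Ioo.mem_nhds hx₀
  obtain ⟨ε, hε, hball⟩ := Metric.mem_nhds_iff.mp hs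
  set f : ContDiffBump x₀ := ⟨ε / 2, ε, by positivity, by linarith⟩
  refine ⟨f, f.contDiff, ?_⟩
  have hnn : ∀ x : ℝ, 0 ≤ m x * (f x) ^ 2 := by
    intro x
    by_cases h : f x = 0
    · simp [h]
    · have hx : x ∈ Metric.ball x₀ ε := by
        rw [← f.support_eq]; exact Function.mem_support.mpr h
      have h1 : 0 < m x := (hball hx).1
      exact mul_nonneg h1.le (sq_nonneg _)
  have hint : IntervalIntegrable (fun x => m x * (f x) ^ 2) volume 0 1 := by
    apply ContinuousOn.intervalIntegrable
    rw [uIcc_of_le zero_le_one]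
    exact hm.mul ((f.continuous.pow 2).continuousOn)
  rw [intervalIntegral.integral_pos_iff_support_of_nonneg_ae
    (Filter.Eventually.of_forall hnn) hint]
  refine ⟨zero_lt_one, ?_⟩
  have hsub : Metric.ball x₀ ε ⊆ Function.support (fun x => m x * (f x) ^ 2) ∩ Ioc 0 1 := by
    intro x hx
    constructor
    · apply Function.mem_support.mpr
      have h1 : 0 < m x := (hball hx).1
      have h2 := f.pos_of_mem_ball hx
      exact (mul_pos h1 (pow_pos h2 2)).ne'
    · exact Ioo_subset_Ioc_self (hball hx).2
  exact lt_of_lt_of_le (Metric.measure_ball_pos volume x₀ hε) (measure_mono hsub)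

/-- The principal positive eigenvalue of the indefinite-weight Neumann problem,
given as the infimum of the Rayleigh quotient. -/
noncomputable def lamStar (m : ℝ → ℝ) : ℝ :=
  sInf { l : ℝ | ∃ φ : ℝ → ℝ, ContDiff ℝ 1 φ ∧
    (0 < ∫ x in (0:ℝ)..1, m x * (φ x) ^ 2) ∧
    l = (∫ x in (0:ℝ)..1, (deriv φ x) ^ 2) /
        (∫ x in (0:ℝ)..1, m x * (φ x) ^ 2) }

theorem stmt6 (m : ℝ → ℝ) (hm : ContinuousOn m (Icc 0 1))
    (hpos : ∃ x ∈ Ioo (0:ℝ) 1, 0 < m x)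
    (hint : (∫ x in (0:ℝ)..1, m x) < 0) :
    0 < lamStar m := by
  obtain ⟨M, hM⟩ := IsCompact.exists_bound_of_continuousOn isCompact_Icc hm
  simp only [Real.norm_eq_abs] at hM
  obtain ⟨x₀, hx₀, hmx₀⟩ := hpos
  have hMpos : 0 < M :=
    lt_of_lt_of_le hmx₀ ((le_abs_self _).trans (hM x₀ (Ioo_subset_Icc_self hx₀)))
  have hδ : 0 < -∫ x in (0:ℝ)..1, m x := by linarith
  set δ : ℝ := -∫ x in (0:ℝ)..1, m x with hδdef
  set C : ℝ := M ^ 2 / δ + M with hC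
  have hCpos : 0 < C := by positivity
  set S := { l : ℝ | ∃ φ : ℝ → ℝ, ContDiff ℝ 1 φ ∧
    (0 < ∫ x in (0:ℝ)..1, m x * (φ x) ^ 2) ∧
    l = (∫ x in (0:ℝ)..1, (deriv φ x) ^ 2) /
        (∫ x in (0:ℝ)..1, m x * (φ x) ^ 2) } with hS
  have hne : S.Nonempty := by
    obtain ⟨φ, hφ, hD⟩ := nonempty_aux m hm ⟨x₀, hx₀, hmx₀⟩
    exact ⟨_, φ, hφ, hD, rfl⟩
  have hbdd : ∀ l ∈ S, 1 / C ≤ l := by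
    rintro l ⟨φ, hφ, hD, rfl⟩
    have hdc : Continuous (deriv φ) := (hφ.iterate_deriv' 0 1).continuous
    have hkey := key_bound m φ hm hφ M hM hMpos hδ
      (fun x hx => dev_aux φ hφ (fun x hx y hy => osc_aux φ hφ hx hy) hx)
      (cs_aux (deriv φ) hdc)
    have hkey' : (∫ x in (0:ℝ)..1, m x * φ x ^ 2)
        ≤ C * ∫ x in (0:ℝ)..1, (deriv φ x) ^ 2 := hkey
    rw [div_le_div_iff₀ hCpos hD]
    nlinarith [hkey', hD, hCpos]
  have hlow : 1 / C ≤ lamStar m := le_csInf hne hbdd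
  exact lt_of_lt_of_le (by positivity) hlow
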